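/- arXiv:1910.08631 — 6 statements merged into one kernel-verified Lean document; each statement's English description precedes it below -/
import Mathlib

section
/- Every extension of a group G in K by a normal subgroup H embeds into the wreath product: if H is a normal subgroup of K with quotient G = K/H, then K embeds into the (unrestricted) wreath product H ≀ G = H^G ⋊ G (Kaloujnine–Krasner theorem). -/
/-- The action of `G` on `G → H` given by `(g · f) x = f (x * g)`. -/
def wAct (H G : Type) [Group H] [Group G] : G →* MulAut (G → H) where
  toFun g :=
    { toFun := fun f x => f (x * g)
      invFun := fun f x => f (x * g⁻¹)
      left_inv := fun f => funext fun x => by simp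
      right_inv := fun f => funext fun x => by simp
      map_mul' := fun f₁ f₂ => rfl }
  map_one' := by
    ext f x
    simp
  map_mul' := fun g₁ g₂ => by
    ext f x
    simp [mul_assoc]

/-- The unrestricted wreath product `H ≀ G = H^G ⋊ G`. -/
def Wr (H G : Type) [Group H] [Group G] := (G → H) ⋊[wAct H G] G

instance (H G : Type) [Group H] [Group G] : Group (Wr H G) :=
  inferInstanceAs (Group ((G → H) ⋊[wAct H G] G))

/-!
Choose a section `s` of `K → K/H`. For `k ∈ K` and a coset `q`, the element
`s q * k * (s (q k))⁻¹` lies in `H`, and as a function of `q` it satisfies the cocycle identity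
`c (k₁ k₂) q = c k₁ q * c k₂ (q k₁)`, which is exactly the multiplication rule of `H ≀ (K/H)`.
Hence `k ↦ (c k, k H)` is a homomorphism, and it is injective since `k` can be recovered as
`(s q)⁻¹ * c k q * s (q k)`.
-/

namespace KaloujnineKrasner

variable {K : Type} [Group K] {H : Subgroup K} [H.Normal]
  {s : K ⧸ H → K} (hs : ∀ q, (s q : K ⧸ H) = q)

def cocycle (k : K) (q : K ⧸ H) : H :=
  ⟨s q * k * (s (q * k))⁻¹, by
    rw [← QuotientGroup.eq_one_iff, QuotientGroup.mk_mul, QuotientGroup.mk_inv,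
      QuotientGroup.mk_mul, hs, hs, mul_inv_cancel]⟩

@[simp]
lemma coe_cocycle (k : K) (q : K ⧸ H) : (cocycle hs k q : K) = s q * k * (s (q * k))⁻¹ :=
  rfl

lemma cocycle_mul (k₁ k₂ : K) (q : K ⧸ H) :
    cocycle hs (k₁ * k₂) q = cocycle hs k₁ q * cocycle hs k₂ (q * k₁) := by
  ext
  simp only [coe_cocycle, Subgroup.coe_mul, QuotientGroup.mk_mul, mul_assoc]
  group

noncomputable def embedding : K →* (K ⧸ H → H) ⋊[wAct H (K ⧸ H)] (K ⧸ H) where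
  toFun k := ⟨cocycle hs k, k⟩
  map_one' := by
    ext q
    · simp
    · rfl
  map_mul' k₁ k₂ := by
    ext q
    · exact congrArg Subtype.val (cocycle_mul hs k₁ k₂ q)
    · rfl

lemma embedding_injective : Function.Injective (embedding hs) := by
  intro k₁ k₂ h
  have h_right : (k₁ : K ⧸ H) = k₂ := congrArg SemidirectProduct.right h
  have h_left : s 1 * k₁ * (s (1 * k₁))⁻¹ = s 1 * k₂ * (s (1 * k₂))⁻¹ :=
    congrArg Subtype.val (congrFun (congrArg SemidirectProduct.left h) 1)
  rw [h_right] at h_left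
  exact mul_left_cancel (mul_right_cancel h_left)

end KaloujnineKrasner

/-- Kaloujnine–Krasner: any extension `K` of `G = K/H` by a normal subgroup `H`
embeds into the unrestricted wreath product `H ≀ G`. -/
theorem kaloujnine_krasner (K : Type) [Group K] (H : Subgroup K) [H.Normal] :
    ∃ ψ : K →* Wr ↥H (K ⧸ H), Function.Injective ψ :=
  ⟨KaloujnineKrasner.embedding (s := Quotient.out) QuotientGroup.out_eq',
    KaloujnineKrasner.embedding_injective _⟩
end

section
/- If a group K is residually weakly sofic (i.e., for every nontrivial k ∈ K there is a homomorphism from K to a weakly sofic group not killing k), then K is weakly sofic. -/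
/-- A bi-invariant metric on a group. -/
def IsBiInvariantMetric {F : Type} [Group F] (d : F → F → ℝ) : Prop :=
  (∀ a b, d a b = 0 ↔ a = b) ∧ (∀ a b, d a b = d b a) ∧
  (∀ a b c, d a c ≤ d a b + d b c) ∧
  (∀ a b c, d (c * a) (c * b) = d a b) ∧ (∀ a b c, d (a * c) (b * c) = d a b)

/-- A group is weakly sofic if it is metrically approximable by finite groups
equipped with bi-invariant metrics. -/
def WeaklySofic (K : Type) [Group K] : Prop :=
  ∀ (S : Finset K) (ε : ℝ), 0 < ε →
    ∃ (F : Type) (_ : Fintype F) (_ : Group F) (d : F → F → ℝ) (φ : K → F),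
      IsBiInvariantMetric d ∧ φ 1 = 1 ∧
      (∀ x ∈ S, ∀ y ∈ S, d (φ (x * y)) (φ x * φ y) ≤ ε) ∧
      (∀ x ∈ S, x ≠ 1 → 1 ≤ d (φ x) 1)

/-!
Separating the nontrivial elements of a finite set `S ⊆ K` can be done one element at a time:
for each `k ∈ S \ {1}` pull back an approximation of a weakly sofic group `W` along some
`f : K →* W` with `f k ≠ 1`, and take the product of these finitely many finite groups with
the sum of the metrics. The sum metric is again bi-invariant and sees each factor's separation,
while its defect is at most the number of factors times the defect of each factor, so it
suffices to approximate each factor to within `ε / (|S \ {1}| + 1)`.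
-/

namespace IsBiInvariantMetric

variable {F : Type} [Group F] {d : F → F → ℝ}

theorem nonneg (hd : IsBiInvariantMetric d) (a b : F) : 0 ≤ d a b := by
  have h_self : d a a = 0 := (hd.1 a a).mpr rfl
  have h_tri := hd.2.2.1 a b a
  rw [hd.2.1 b a] at h_tri
  linarith

theorem pi_sum {ι : Type} [Fintype ι] {G : ι → Type} [∀ i, Group (G i)]
    {d : ∀ i, G i → G i → ℝ} (hd : ∀ i, IsBiInvariantMetric (d i)) :
    IsBiInvariantMetric fun a b : (∀ i, G i) => ∑ i, d i (a i) (b i) := by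
  refine ⟨fun a b => ⟨fun h0 => ?_, ?_⟩, fun a b => ?_, fun a b c => ?_, fun a b c => ?_,
    fun a b c => ?_⟩
  · funext i
    have := (Finset.sum_eq_zero_iff_of_nonneg fun i _ => (hd i).nonneg (a i) (b i)).mp h0 i
      (Finset.mem_univ i)
    exact ((hd i).1 _ _).mp this
  · rintro rfl
    exact Finset.sum_eq_zero fun i _ => ((hd i).1 _ _).mpr rfl
  · exact Finset.sum_congr rfl fun i _ => (hd i).2.1 _ _
  · calc ∑ i, d i (a i) (c i) ≤ ∑ i, (d i (a i) (b i) + d i (b i) (c i)) :=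
          Finset.sum_le_sum fun i _ => (hd i).2.2.1 _ _ _
      _ = _ := Finset.sum_add_distrib
  · exact Finset.sum_congr rfl fun i _ => (hd i).2.2.2.1 _ _ _
  · exact Finset.sum_congr rfl fun i _ => (hd i).2.2.2.2 _ _ _

end IsBiInvariantMetric

def IsAlmostHom {K F : Type} [Group K] [Group F] (d : F → F → ℝ) (S : Finset K) (ε : ℝ)
    (φ : K → F) : Prop :=
  φ 1 = 1 ∧ ∀ x ∈ S, ∀ y ∈ S, d (φ (x * y)) (φ x * φ y) ≤ ε

namespace IsAlmostHom

variable {K F : Type} [Group K] [Group F] {d : F → F → ℝ} {S : Finset K} {ε : ℝ} {φ : K → F}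

theorem mono {ε' : ℝ} (hφ : IsAlmostHom d S ε φ) (hε : ε ≤ ε') : IsAlmostHom d S ε' φ :=
  ⟨hφ.1, fun x hx y hy => (hφ.2 x hx y hy).trans hε⟩

theorem comp_monoidHom [DecidableEq K] {L : Type} [Group L] {T : Finset L} (f : L →* K)
    (hφ : IsAlmostHom d (T.image f) ε φ) : IsAlmostHom d T ε (φ ∘ f) := by
  refine ⟨by simp [hφ.1], fun x hx y hy => ?_⟩
  simpa [map_mul] using hφ.2 _ (Finset.mem_image_of_mem f hx) _ (Finset.mem_image_of_mem f hy)

theorem pi {ι : Type} [Fintype ι] {G : ι → Type} [∀ i, Group (G i)]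
    {d : ∀ i, G i → G i → ℝ} {φ : ∀ i, K → G i} (hφ : ∀ i, IsAlmostHom (d i) S ε (φ i)) :
    IsAlmostHom (fun a b : (∀ i, G i) => ∑ i, d i (a i) (b i)) S (Fintype.card ι * ε)
      (fun x i => φ i x) := by
  refine ⟨funext fun i => (hφ i).1, fun x hx y hy => ?_⟩
  calc ∑ i, d i (φ i (x * y)) (φ i x * φ i y) ≤ ∑ _i : ι, ε :=
        Finset.sum_le_sum fun i _ => (hφ i).2 x hx y hy
    _ = Fintype.card ι * ε := by simp

end IsAlmostHom

def ExistsSeparatingAlmostHom {K : Type} [Group K] (S : Finset K) (ε : ℝ) (k : K) : Prop :=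
  ∃ (F : Type) (_ : Fintype F) (_ : Group F) (d : F → F → ℝ) (φ : K → F),
    IsBiInvariantMetric d ∧ IsAlmostHom d S ε φ ∧ 1 ≤ d (φ k) 1

theorem existsSeparatingAlmostHom_of_weaklySofic {K W : Type} [Group K] [Group W]
    (hW : WeaklySofic W) (f : K →* W) {S : Finset K} {ε : ℝ} (hε : 0 < ε) {k : K}
    (hkS : k ∈ S) (hk : f k ≠ 1) : ExistsSeparatingAlmostHom S ε k := by
  classical
  obtain ⟨F, _, _, d, φ, hd, hφ1, hφmul, hφsep⟩ := hW (S.image f) ε hε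
  exact ⟨F, inferInstance, inferInstance, d, φ ∘ f, hd,
    IsAlmostHom.comp_monoidHom f ⟨hφ1, hφmul⟩, hφsep _ (Finset.mem_image_of_mem f hkS) hk⟩

theorem weaklySofic_of_forall_existsSeparatingAlmostHom {K : Type} [Group K]
    (h : ∀ (S : Finset K) (ε : ℝ), 0 < ε → ∀ k ∈ S, k ≠ 1 → ExistsSeparatingAlmostHom S ε k) :
    WeaklySofic K := by
  classical
  intro S ε hε
  set T := S.filter (· ≠ 1)
  have hδ : 0 < ε / (T.card + 1) := by positivity
  choose F _ _ d φ hd hφ hφsep using fun k : T =>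
    h S _ hδ k (Finset.mem_filter.mp k.2).1 (Finset.mem_filter.mp k.2).2
  have hprod := IsAlmostHom.pi hφ
  have hcard : (Fintype.card T : ℝ) * (ε / (T.card + 1)) ≤ ε := by
    rw [Fintype.card_coe, mul_div_assoc', div_le_iff₀ (by positivity)]
    nlinarith
  refine ⟨∀ k : T, F k, inferInstance, inferInstance, fun a b => ∑ k, d k (a k) (b k),
    fun x k => φ k x, IsBiInvariantMetric.pi_sum hd,
    hprod.1, (hprod.mono hcard).2, fun x hxS hx1 => ?_⟩
  have hxT : x ∈ T := Finset.mem_filter.mpr ⟨hxS, hx1⟩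
  exact (hφsep ⟨x, hxT⟩).trans <| Finset.single_le_sum
    (f := fun k => d k (φ k x) 1) (fun k _ => (hd k).nonneg _ _) (Finset.mem_univ _)

/-- A residually weakly sofic group is weakly sofic. -/
theorem residually_weaklySofic_is_weaklySofic (K : Type) [Group K]
    (h : ∀ k : K, k ≠ 1 →
      ∃ (W : Type) (_ : Group W) (f : K →* W), WeaklySofic W ∧ f k ≠ 1) :
    WeaklySofic K := by
  refine weaklySofic_of_forall_existsSeparatingAlmostHom fun S ε hε k hkS hk => ?_
  obtain ⟨W, _, f, hW, hfk⟩ := h k hk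
  exact existsSeparatingAlmostHom_of_weaklySofic hW f hε hkS hfk
end

section
/- Let γ : A → B be a surjective group homomorphism with section T ⊆ A (γ restricted to T is a bijection onto B), and H a group. Define the map H^A → H^B, φ ↦ φ_γ, by φ_γ(γ(x)) = φ(x) for x ∈ T, and the induced map H ≀ A → H ≀ B by (φ, α) ↦ (φ_γ, γ(α)). Let p be a group word in constants and variables, S the set of suffixes (initial subwords) of p, and (φ̄, ᾱ) a tuple in (H ≀ A)^(k+n). Write p(φ̄, ᾱ) = (ψ, p(ᾱ)) and p(φ̄_γ, ᾱ_γ) = (ψ̃, γ(p(ᾱ))). Then for any x ∈ A such that x·S(ᾱ) ⊆ T, we have ψ(x) = ψ̃(γ(x)). -/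
lemma wAct_apply (H G : Type) [Group H] [Group G] (g : G) (f : G → H) (x : G) :
    (wAct H G g f) x = f (x * g) := rfl

/-- Locality of the wreath product: if `γ : A → B` is surjective with section `T`,
`pull` is the induced map `H^A → H^B` (defined by `pull φ (γ x) = φ x` for `x ∈ T`),
and `x · S(αb) ⊆ T` where `S` is the set of initial subwords of `p`, then the left
components of `p(φb, αb)` and `p(φb_γ, αb_γ)` agree at `x` and `γ x`. -/
theorem wreath_locality (A B H : Type) [Group A] [Group B] [Group H]
    (γ : A →* B) (hγ : Function.Surjective γ)
    (T : Set A) (hT : Set.BijOn γ T Set.univ)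
    (pull : (A → H) → (B → H))
    (hpull : ∀ φ : A → H, ∀ x ∈ T, pull φ (γ x) = φ x)
    (ι : Type) [DecidableEq ι] (p : FreeGroup ι) (φb : ι → A → H) (αb : ι → A) (x : A)
    (hx : ∀ m : ℕ, x * FreeGroup.lift αb (FreeGroup.mk (p.toWord.take m)) ∈ T) :
    (FreeGroup.lift (fun i => (⟨φb i, αb i⟩ : Wr H A)) p).left x =
      (FreeGroup.lift (fun i => (⟨pull (φb i), γ (αb i)⟩ : Wr H B)) p).left (γ x) := by
  classical
  suffices h : ∀ (L : List (ι × Bool)) (x : A),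
      (∀ m : ℕ, x * ((L.take m).map (fun z => cond z.2 (αb z.1) (αb z.1)⁻¹)).prod ∈ T) →
      ((L.map (fun z => cond z.2 ((⟨φb z.1, αb z.1⟩ : Wr H A))
          (⟨φb z.1, αb z.1⟩ : Wr H A)⁻¹)).prod).left x =
        ((L.map (fun z => cond z.2 ((⟨pull (φb z.1), γ (αb z.1)⟩ : Wr H B))
          (⟨pull (φb z.1), γ (αb z.1)⟩ : Wr H B)⁻¹)).prod).left (γ x) by
    conv_lhs => rw [← FreeGroup.mk_toWord (x := p)]
    conv_rhs => rw [← FreeGroup.mk_toWord (x := p)]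
    rw [FreeGroup.lift_mk, FreeGroup.lift_mk]
    apply h
    intro m
    have := hx m
    rwa [FreeGroup.lift_mk] at this
  intro L
  induction L with
  | nil =>
    intro x _
    rfl
  | cons z L ih =>
    obtain ⟨i, b⟩ := z
    intro x hx0
    have hxT : x ∈ T := by simpa using hx0 0
    have hright : ∀ (M : List (ι × Bool)),
        ((M.map (fun z => cond z.2 ((⟨φb z.1, αb z.1⟩ : Wr H A))
          (⟨φb z.1, αb z.1⟩ : Wr H A)⁻¹)).prod).right
        = (M.map (fun z => cond z.2 (αb z.1) (αb z.1)⁻¹)).prod := by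
      intro M
      induction M with
      | nil => rfl
      | cons w M ihM =>
        obtain ⟨j, c⟩ := w
        cases c <;>
          · simp only [List.map_cons, List.prod_cons, cond_true, cond_false,
              SemidirectProduct.mul_right, SemidirectProduct.inv_right, ihM]
    cases b with
    | true =>
      have htail : ∀ m : ℕ,
          (x * αb i) * ((L.take m).map (fun z => cond z.2 (αb z.1) (αb z.1)⁻¹)).prod ∈ T := by
        intro m
        have := hx0 (m + 1)
        simpa [mul_assoc] using this
      have := ih (x * αb i) htail
      simp only [List.map_cons, List.prod_cons, cond_true,
        SemidirectProduct.mul_left, Pi.mul_apply, wAct_apply]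
      rw [hpull (φb i) x hxT, this, map_mul]
    | false =>
      have hiT : x * (αb i)⁻¹ ∈ T := by simpa using hx0 1
      have htail : ∀ m : ℕ,
          (x * (αb i)⁻¹) * ((L.take m).map (fun z => cond z.2 (αb z.1) (αb z.1)⁻¹)).prod ∈ T := by
        intro m
        have := hx0 (m + 1)
        simpa [mul_assoc] using this
      have hih := ih (x * (αb i)⁻¹) htail
      simp only [List.map_cons, List.prod_cons, cond_false,
        SemidirectProduct.mul_left, SemidirectProduct.inv_left,
        SemidirectProduct.inv_right, Pi.mul_apply, wAct_apply, Pi.inv_apply]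
      rw [hih]
      have : pull (φb i) (γ x * (γ (αb i))⁻¹) = φb i (x * (αb i)⁻¹) := by
        rw [← map_inv, ← map_mul]
        exact hpull (φb i) _ hiT
      rw [this, map_mul, map_inv]
end

section
/- Existence of universal solutions: Let G be a finitely generated residually finite group with profinite completion Ĝ, H a finite group, w̄ a finite system of group equations with k constants and n variables solvable in every finite group, and ā ∈ Ĝ^k. Then there exists ū ∈ Ĝ^n such that for every finite-index normal subgroup N of G, writing G_N = G/N, for every f̄ ∈ (H^{G_N})^k there exists φ̄ ∈ (H^{G_N})^n with w̄((f̄, ā_N), (φ̄, ū_N)) = 1 in H ≀ G_N. -/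
/-- The finite-index normal subgroups of `G`. -/
abbrev FinIdxNormal (G : Type) [Group G] : Type :=
  {N : Subgroup G // N.Normal ∧ N.FiniteIndex}

instance (G : Type) [Group G] (N : FinIdxNormal G) : N.1.Normal := N.2.1

/-- The profinite completion of `G`, realized as the subgroup of the product
of all finite quotients consisting of the compatible families. -/
def profCompletion (G : Type) [Group G] :
    Subgroup (∀ N : FinIdxNormal G, G ⧸ N.1) where
  carrier := {x | ∀ (N M : FinIdxNormal G) (h : N.1 ≤ M.1),
    QuotientGroup.map N.1 M.1 (MonoidHom.id G) (fun g hg => h hg) (x N) = x M}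
  one_mem' := fun N M h => by simp
  mul_mem' := by
    intro a b ha hb N M h
    simp only [Pi.mul_apply, map_mul, ha N M h, hb N M h]
  inv_mem' := by
    intro a ha N M h
    simp only [Pi.inv_apply, map_inv, ha N M h]

/-- The projection `η_N` from the profinite completion to the finite quotient `G/N`. -/
def profProj (G : Type) [Group G] (N : FinIdxNormal G) :
    profCompletion G →* G ⧸ N.1 :=
  (Pi.evalMonoidHom _ N).comp (profCompletion G).subtype

/-- A finite system of group equations `w` (with `k` constants, `n` variables,
`r` equations) is solvable in every finite group: for every finite group `F` and
every choice of constants there are values of the variables solving the system. -/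
def SolvableInAllFinite (k n r : ℕ) (w : Fin r → FreeGroup (Fin k ⊕ Fin n)) : Prop :=
  ∀ (F : Type) [Fintype F] [Group F], ∀ a : Fin k → F,
    ∃ x : Fin n → F, ∀ j : Fin r, FreeGroup.lift (Sum.elim a x) (w j) = 1

section AuxUniversal

open CategoryTheory

variable (G : Type) [Group G]

instance finIdxQuotientFinite (N : FinIdxNormal G) : Finite (G ⧸ N.1) :=
  @Subgroup.finite_quotient_of_finiteIndex G _ N.1 N.2.2

instance wrFinite (H Q : Type) [Group H] [Group Q] [Finite H] [Finite Q] :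
    Finite (Wr H Q) :=
  Finite.of_surjective (fun p : (Q → H) × Q => (⟨p.1, p.2⟩ : Wr H Q))
    (fun x => ⟨(SemidirectProduct.left x, SemidirectProduct.right x), rfl⟩)

/-- The natural map between finite quotients. -/
def qm {N M : FinIdxNormal G} (h : N.1 ≤ M.1) : G ⧸ N.1 →* G ⧸ M.1 :=
  QuotientGroup.map N.1 M.1 (MonoidHom.id G) fun g hg => h hg

lemma qm_qm {N M P : FinIdxNormal G} (h : N.1 ≤ M.1) (h' : M.1 ≤ P.1) (x : G ⧸ N.1) :
    qm G h' (qm G h x) = qm G (h.trans h') x := by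
  induction x using QuotientGroup.induction_on
  rfl

lemma qm_self {N : FinIdxNormal G} (h : N.1 ≤ N.1) (x : G ⧸ N.1) : qm G h x = x := by
  induction x using QuotientGroup.induction_on
  rfl

lemma qm_profProj {N M : FinIdxNormal G} (h : N.1 ≤ M.1) (x : profCompletion G) :
    qm G h (profProj G N x) = profProj G M x :=
  x.2 N M h

variable (H : Type) [Group H] (k n r : ℕ) (w : Fin r → FreeGroup (Fin k ⊕ Fin n))
  (a : Fin k → profCompletion G)

/-- A tuple `v` in `(G/N)^n` is good if for every `f̄` the system has a solution
with `v` as the `G/N`-components of the variables. -/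
def Good (N : FinIdxNormal G) (v : Fin n → G ⧸ N.1) : Prop :=
  ∀ f : Fin k → ((G ⧸ N.1) → H),
    ∃ φ : Fin n → ((G ⧸ N.1) → H), ∀ j : Fin r,
      FreeGroup.lift
        (Sum.elim
          (fun i => (⟨f i, profProj G N (a i)⟩ : Wr H (G ⧸ N.1)))
          (fun i => (⟨φ i, v i⟩ : Wr H (G ⧸ N.1))))
        (w j) = 1

lemma exists_goodAll [Fintype H] (hw : SolvableInAllFinite k n r w) (M : FinIdxNormal G) :
    ∃ v : Fin n → G ⧸ M.1, ∀ (N : FinIdxNormal G) (h : M.1 ≤ N.1),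
      Good G H k n r w a N fun i => qm G h (v i) := by
  classical
  haveI : Finite {N : FinIdxNormal G // M.1 ≤ N.1} := by
    haveI hfin : Finite (Subgroup (G ⧸ M.1)) :=
      Finite.of_injective _ (SetLike.coe_injective (A := Subgroup (G ⧸ M.1)))
    refine Finite.of_injective
      (fun N : {N : FinIdxNormal G // M.1 ≤ N.1} =>
        N.1.1.map (QuotientGroup.mk' M.1)) ?_
    intro N N' hNN'
    have h2 := congrArg (Subgroup.comap (QuotientGroup.mk' M.1)) hNN'
    rw [Subgroup.comap_map_eq, Subgroup.comap_map_eq, QuotientGroup.ker_mk',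
      sup_eq_left.mpr N.2, sup_eq_left.mpr N'.2] at h2
    exact Subtype.ext (Subtype.ext h2)
  let I := (N' : {N : FinIdxNormal G // M.1 ≤ N.1}) × (Fin k → ((G ⧸ N'.1.1) → H))
  let B := ∀ p : I, Wr H (G ⧸ p.1.1.1)
  let K : Subgroup B :=
  { carrier := {x | ∃ g : G ⧸ M.1, ∀ p : I,
      SemidirectProduct.rightHom (x p) = qm G p.1.2 g}
    one_mem' := ⟨1, fun p => by rw [Pi.one_apply, map_one]; rfl⟩
    mul_mem' := by
      rintro x y ⟨g, hg⟩ ⟨g', hg'⟩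
      exact ⟨g * g', fun p => by
        rw [Pi.mul_apply, map_mul, ← hg p, ← hg' p]
        exact map_mul (SemidirectProduct.rightHom (φ := wAct H (G ⧸ p.1.1.1))) (x p) (y p)⟩
    inv_mem' := by
      rintro x ⟨g, hg⟩
      exact ⟨g⁻¹, fun p => by
        rw [Pi.inv_apply, map_inv, ← hg p]
        exact map_inv (SemidirectProduct.rightHom (φ := wAct H (G ⧸ p.1.1.1))) (x p)⟩ }
  haveI : Fintype K := Fintype.ofFinite K
  have hc : ∀ i : Fin k,
      (fun p : I => (⟨p.2 i, profProj G p.1.1 (a i)⟩ : Wr H (G ⧸ p.1.1.1))) ∈ K :=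
    fun i => ⟨profProj G M (a i), fun p => (qm_profProj G p.1.2 (a i)).symm⟩
  obtain ⟨x, hx⟩ := hw K fun i => ⟨_, hc i⟩
  refine ⟨fun i => Classical.choose (x i).2, ?_⟩
  intro N h f
  set p : I := ⟨⟨N, h⟩, f⟩ with hp
  let π : K →* Wr H (G ⧸ N.1) :=
    (Pi.evalMonoidHom (fun q : I => Wr H (G ⧸ q.1.1.1)) p).comp K.subtype
  refine ⟨fun i => SemidirectProduct.left ((x i).1 p), fun j => ?_⟩
  have hcomp : π.comp (FreeGroup.lift (Sum.elim (fun i => (⟨_, hc i⟩ : K)) x)) =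
      FreeGroup.lift (fun s => π (Sum.elim (fun i => (⟨_, hc i⟩ : K)) x s)) := by
    apply FreeGroup.ext_hom
    intro s
    simp
  have key : FreeGroup.lift
      (fun s => π (Sum.elim (fun i => (⟨_, hc i⟩ : K)) x s)) (w j) = 1 := by
    rw [← hcomp, MonoidHom.comp_apply, hx j, map_one]
  have he : (Sum.elim
      (fun i => (⟨f i, profProj G N (a i)⟩ : Wr H (G ⧸ N.1)))
      (fun i => (⟨SemidirectProduct.left ((x i).1 p),
        qm G h (Classical.choose (x i).2)⟩ : Wr H (G ⧸ N.1))))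
      = fun s => π (Sum.elim (fun i => (⟨_, hc i⟩ : K)) x s) := by
    funext s
    cases s with
    | inl i => rfl
    | inr i =>
      have hspec := Classical.choose_spec (x i).2 p
      exact SemidirectProduct.ext rfl hspec.symm
  rw [he]
  exact key

end AuxUniversal

open CategoryTheory in
/-- Existence of `(H, ā)`-universal solutions: for a finitely generated
residually finite `G`, a finite group `H`, a system `w` solvable in all finite
groups and constants `ā` in the profinite completion of `G`, there is a tuple
`ū` in the profinite completion such that for every finite-index normal
subgroup `N` and every `f̄ ∈ (H^{G/N})^k` the system has a solution of the
form `(φ̄, ū_N)` in `H ≀ (G/N)` for the constants `(f̄, ā_N)`. -/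
theorem exists_universal_solution (G : Type) [Group G] (hfg : Group.FG G)
    (hrf : ∀ g : G, g ≠ 1 → ∃ N : Subgroup G, N.Normal ∧ N.FiniteIndex ∧ g ∉ N)
    (H : Type) [Group H] [Fintype H]
    (k n r : ℕ) (w : Fin r → FreeGroup (Fin k ⊕ Fin n))
    (hw : SolvableInAllFinite k n r w)
    (a : Fin k → profCompletion G) :
    ∃ u : Fin n → profCompletion G, ∀ N : FinIdxNormal G,
      ∀ f : Fin k → ((G ⧸ N.1) → H),
        ∃ φ : Fin n → ((G ⧸ N.1) → H), ∀ j : Fin r,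
          FreeGroup.lift
            (Sum.elim
              (fun i => (⟨f i, profProj G N (a i)⟩ : Wr H (G ⧸ N.1)))
              (fun i => (⟨φ i, profProj G N (u i)⟩ : Wr H (G ⧸ N.1))))
            (w j) = 1 := by
  classical
  haveI : IsDirected (FinIdxNormal G) (· ≥ ·) := by
    constructor
    intro N M
    haveI := N.2.2
    haveI := M.2.2
    refine ⟨⟨N.1 ⊓ M.1, inferInstance, inferInstance⟩, ?_, ?_⟩
    · exact (inf_le_left : N.1 ⊓ M.1 ≤ N.1)
    · exact (inf_le_right : N.1 ⊓ M.1 ≤ M.1)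
  let F : FinIdxNormal G ⥤ Type :=
  { obj := fun N => {v : Fin n → G ⧸ N.1 //
      ∀ (P : FinIdxNormal G) (hP : N.1 ≤ P.1), Good G H k n r w a P fun i => qm G hP (v i)}
    map := fun {N M} hNM => TypeCat.ofHom fun v =>
      ⟨fun i => qm G (leOfHom hNM : N.1 ≤ M.1) (v.1 i), fun P hP => by
        have e : (fun i => qm G hP (qm G (leOfHom hNM : N.1 ≤ M.1) (v.1 i)))
            = fun i => qm G ((leOfHom hNM : N.1 ≤ M.1).trans hP) (v.1 i) :=
          funext fun i => qm_qm G _ _ _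
        rw [e]
        exact v.2 P _⟩
    map_id := fun N => by
      ext v i
      exact qm_self G _ _
    map_comp := fun {N M P} h h' => by
      ext v i
      exact (qm_qm G _ _ _).symm }
  haveI : ∀ N : FinIdxNormal G, Finite (F.obj N) := fun N => Subtype.finite
  haveI : ∀ N : FinIdxNormal G, Nonempty (F.obj N) := by
    intro N
    obtain ⟨v, hv⟩ := exists_goodAll G H k n r w a hw N
    exact ⟨⟨v, hv⟩⟩
  obtain ⟨s, hs⟩ := nonempty_sections_of_finite_cofiltered_system F
  refine ⟨fun i => ⟨fun N => (s N).1 i, ?_⟩, ?_⟩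
  · intro N M h
    have h2 := congrFun (congrArg Subtype.val (hs (homOfLE (show N ≤ M from h)))) i
    exact h2
  · intro N f
    have hgood := (s N).2 N le_rfl
    have e : (fun i => qm G le_rfl ((s N).1 i)) = fun i => (s N).1 i :=
      funext fun i => qm_self G _ _
    rw [e] at hgood
    exact hgood f
end

section
/- A group K is weakly sofic if and only if every finite system of group equations that is solvable in all finite groups is solvable over K. -/
section WordNorm

variable {F : Type} [Group F] (P : Set F) (m : ℕ)

def okP (g : F) (q : ℕ) : Prop :=
  ∃ l : List F, l.length = q ∧ (∀ y ∈ l, y ∈ P) ∧ l.prod = g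

noncomputable def DP (g : F) : ℕ := sInf {q | okP P g q ∨ q = m}

variable {P m}

lemma DP_set_nonempty (g : F) : {q | okP P g q ∨ q = m}.Nonempty := ⟨m, Or.inr rfl⟩

lemma DP_le_m (g : F) : DP P m g ≤ m := Nat.sInf_le (Or.inr rfl)

lemma DP_spec (g : F) : okP P g (DP P m g) ∨ DP P m g = m :=
  Nat.sInf_mem (DP_set_nonempty g)

lemma DP_le_of_ok {g : F} {q : ℕ} (h : okP P g q) : DP P m g ≤ q := Nat.sInf_le (Or.inl h)

lemma okP_one : okP P (1 : F) 0 := ⟨[], rfl, by simp, by simp⟩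

lemma DP_one : DP P m (1 : F) = 0 := Nat.le_zero.1 (DP_le_of_ok okP_one)

lemma eq_one_of_okP_zero {g : F} (h : okP P g 0) : g = 1 := by
  obtain ⟨l, hl, -, hp⟩ := h
  rw [List.length_eq_zero_iff] at hl
  subst hl; simpa using hp.symm

lemma eq_one_of_DP_eq_zero (hm : 1 ≤ m) {g : F} (h : DP P m g = 0) : g = 1 := by
  have h0 : 0 ∈ {q | okP P g q ∨ q = m} := h ▸ Nat.sInf_mem (DP_set_nonempty g)
  rcases h0 with h0 | h0
  · exact eq_one_of_okP_zero h0
  · omega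

lemma okP_mul {g h : F} {q1 q2 : ℕ} (h1 : okP P g q1) (h2 : okP P h q2) :
    okP P (g * h) (q1 + q2) := by
  obtain ⟨l1, hl1, hm1, hp1⟩ := h1
  obtain ⟨l2, hl2, hm2, hp2⟩ := h2
  exact ⟨l1 ++ l2, by simp [hl1, hl2], by
    intro y hy; rcases List.mem_append.1 hy with hy | hy
    exacts [hm1 y hy, hm2 y hy], by simp [hp1, hp2]⟩

lemma DP_mul (g h : F) : DP P m (g * h) ≤ DP P m g + DP P m h := by
  rcases DP_spec (P := P) (m := m) g with hg | hg
  · rcases DP_spec (P := P) (m := m) h with hh | hh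
    · exact DP_le_of_ok (okP_mul hg hh)
    · have := DP_le_m (P := P) (m := m) (g * h); omega
  · have := DP_le_m (P := P) (m := m) (g * h); omega

lemma okP_inv (hinv : ∀ y ∈ P, y⁻¹ ∈ P) {g : F} {q : ℕ} (h : okP P g q) : okP P g⁻¹ q := by
  obtain ⟨l, hl, hmem, hp⟩ := h
  refine ⟨(l.map fun x => x⁻¹).reverse, by simp [hl], ?_, ?_⟩
  · intro y hy
    simp only [List.mem_reverse, List.mem_map] at hy
    obtain ⟨z, hz, rfl⟩ := hy
    exact hinv z (hmem z hz)
  · rw [← List.prod_inv_reverse, hp]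

lemma DP_inv (hinv : ∀ y ∈ P, y⁻¹ ∈ P) (g : F) : DP P m g⁻¹ = DP P m g := by
  have h1 : ∀ x : F, DP P m x⁻¹ ≤ DP P m x := by
    intro x
    rcases DP_spec (P := P) (m := m) x with hx | hx
    · exact DP_le_of_ok (okP_inv hinv hx)
    · have := DP_le_m (P := P) (m := m) x⁻¹; omega
  refine le_antisymm (h1 g) ?_
  have := h1 g⁻¹; simpa using this

lemma list_prod_conj {F : Type} [Group F] (u : F) :
    ∀ l : List F, (l.map fun y => u * y * u⁻¹).prod = u * l.prod * u⁻¹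
  | [] => by simp
  | x :: xs => by
      simp only [List.map_cons, List.prod_cons, list_prod_conj u xs]
      group

lemma okP_conj (hconj : ∀ y ∈ P, ∀ u : F, u * y * u⁻¹ ∈ P) {g : F} {q : ℕ} (u : F)
    (h : okP P g q) : okP P (u * g * u⁻¹) q := by
  obtain ⟨l, hl, hmem, hp⟩ := h
  refine ⟨l.map fun y => u * y * u⁻¹, by simp [hl], ?_, ?_⟩
  · intro y hy
    simp only [List.mem_map] at hy
    obtain ⟨z, hz, rfl⟩ := hy
    exact hconj z (hmem z hz) u
  · rw [list_prod_conj, hp]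

lemma DP_conj (hconj : ∀ y ∈ P, ∀ u : F, u * y * u⁻¹ ∈ P) (u g : F) :
    DP P m (u * g * u⁻¹) = DP P m g := by
  have h1 : ∀ v x : F, DP P m (v * x * v⁻¹) ≤ DP P m x := by
    intro v x
    rcases DP_spec (P := P) (m := m) x with hx | hx
    · exact DP_le_of_ok (okP_conj hconj v hx)
    · have := DP_le_m (P := P) (m := m) (v * x * v⁻¹); omega
  refine le_antisymm (h1 u g) ?_
  have := h1 u⁻¹ (u * g * u⁻¹)
  simpa [mul_assoc] using this

end WordNorm

noncomputable def dP {F : Type} [Group F] (P : Set F) (m : ℕ) (g h : F) : ℝ :=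
  (DP P m (g * h⁻¹) : ℝ) / m

lemma dP_def {F : Type} [Group F] (P : Set F) (m : ℕ) (g h : F) :
    dP P m g h = (DP P m (g * h⁻¹) : ℝ) / m := rfl

lemma dP_biinv {F : Type} [Group F] {P : Set F} {m : ℕ} (hm : 1 ≤ m)
    (hinv : ∀ y ∈ P, y⁻¹ ∈ P) (hconj : ∀ y ∈ P, ∀ u : F, u * y * u⁻¹ ∈ P) :
    IsBiInvariantMetric (dP P m) := by
  have hm0 : (0 : ℝ) < (m : ℝ) := by exact_mod_cast Nat.lt_of_lt_of_le Nat.zero_lt_one hm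
  refine ⟨?_, ?_, ?_, ?_, ?_⟩
  · intro a b
    rw [dP_def, div_eq_zero_iff]
    constructor
    · rintro (h | h)
      · have : DP P m (a * b⁻¹) = 0 := by exact_mod_cast h
        have := eq_one_of_DP_eq_zero hm this
        rwa [mul_inv_eq_one] at this
      · exact absurd h (ne_of_gt hm0)
    · rintro rfl
      left
      rw [mul_inv_cancel, DP_one]
      norm_num
  · intro a b
    rw [dP_def, dP_def]
    have : b * a⁻¹ = (a * b⁻¹)⁻¹ := by group
    rw [this, DP_inv hinv]
  · intro a b c
    rw [dP_def, dP_def, dP_def, ← add_div]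
    have h1 : a * c⁻¹ = (a * b⁻¹) * (b * c⁻¹) := by group
    rw [h1]
    have h2 := DP_mul (P := P) (m := m) (a * b⁻¹) (b * c⁻¹)
    gcongr
    exact_mod_cast h2
  · intro a b c
    rw [dP_def, dP_def]
    have : c * a * (c * b)⁻¹ = c * (a * b⁻¹) * c⁻¹ := by group
    rw [this, DP_conj hconj]
  · intro a b c
    rw [dP_def, dP_def]
    have : a * c * (b * c)⁻¹ = a * b⁻¹ := by group
    rw [this]

lemma list_apply_prod {I : Type} {C : I → Type} [∀ i, Group (C i)]
    (l : List (∀ i, C i)) (p : I) : (l.map fun y => y p).prod = l.prod p := by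
  induction l with
  | nil => simp
  | cons a tl ih => simp [ih]

def Wword (k q : ℕ) (is : Fin k) (ρ : Fin q → FreeGroup (Fin k)) :
    FreeGroup (Fin k ⊕ Fin q) :=
  (FreeGroup.of (Sum.inl is))⁻¹ *
    ((List.finRange q).map fun i =>
      FreeGroup.of (Sum.inr i) * FreeGroup.map Sum.inl (ρ i) *
        (FreeGroup.of (Sum.inr i))⁻¹).prod

lemma Wword_eval (k q : ℕ) (is : Fin k) (ρ : Fin q → FreeGroup (Fin k))
    {C : Type} [Group C] (c : Fin k → C) (x : Fin q → C) :
    FreeGroup.lift (Sum.elim c x) (Wword k q is ρ) =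
      (c is)⁻¹ *
        ((List.finRange q).map fun i =>
          x i * FreeGroup.lift c (ρ i) * (x i)⁻¹).prod := by
  have hcomp : ∀ z : FreeGroup (Fin k),
      FreeGroup.lift (Sum.elim c x) (FreeGroup.map Sum.inl z) = FreeGroup.lift c z := by
    intro z
    have : (FreeGroup.lift (Sum.elim c x)).comp (FreeGroup.map Sum.inl) =
        FreeGroup.lift c := by
      apply FreeGroup.ext_hom
      intro a
      simp
    rw [← this]; rfl
  rw [Wword, map_mul, map_inv, map_list_prod, List.map_map]
  congr 1
  · simp
  · congr 1
    apply List.map_congr_left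
    intro i _
    simp only [Function.comp_apply, map_mul, map_inv, FreeGroup.lift_apply_of, Sum.elim_inr, hcomp]

lemma Wword_eval_triv (k q : ℕ) (is : Fin k) (ρ : Fin q → FreeGroup (Fin k))
    {C : Type} [Group C] (c : Fin k → C) (x : Fin q → C)
    (hρ : ∀ i, FreeGroup.lift c (ρ i) = 1) :
    FreeGroup.lift (Sum.elim c x) (Wword k q is ρ) = (c is)⁻¹ := by
  rw [Wword_eval]
  rw [List.prod_eq_one, mul_one]
  intro y hy
  simp only [List.mem_map] at hy
  obtain ⟨i, -, rfl⟩ := hy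
  simp [hρ i]

lemma biinv_self_aux {F : Type} [Group F] {d : F → F → ℝ} (hd : IsBiInvariantMetric d)
    (a : F) : d a a = 0 := (hd.1 a a).2 rfl

section BiInvLemmas

variable {F : Type} [Group F] {d : F → F → ℝ}

lemma biinv_self (hd : IsBiInvariantMetric d) (a : F) : d a a = 0 := (hd.1 a a).2 rfl

lemma biinv_right (hd : IsBiInvariantMetric d) (a b c : F) : d (a * c) (b * c) = d a b :=
  hd.2.2.2.2 a b c

lemma biinv_left (hd : IsBiInvariantMetric d) (a b c : F) : d (c * a) (c * b) = d a b :=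
  hd.2.2.2.1 a b c

lemma biinv_conj_one (hd : IsBiInvariantMetric d) (u t : F) : d (u * t * u⁻¹) 1 = d t 1 := by
  have h1 := biinv_right hd (u * t * u⁻¹) 1 u
  have h2 := biinv_left hd t 1 u
  simp only [inv_mul_cancel_right, one_mul, mul_one] at h1 h2
  rw [← h1, h2]

lemma biinv_inv_one (hd : IsBiInvariantMetric d) (t : F) : d t⁻¹ 1 = d t 1 := by
  have h1 := biinv_right hd t⁻¹ 1 t
  simp only [inv_mul_cancel, one_mul] at h1
  rw [← h1, hd.2.1]

lemma biinv_mul_one (hd : IsBiInvariantMetric d) (a b : F) :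
    d (a * b) 1 ≤ d a 1 + d b 1 := by
  have h := hd.2.2.1 (a * b) b 1
  have h2 := biinv_right hd a 1 b
  simp only [one_mul] at h2
  calc d (a * b) 1 ≤ d (a * b) b + d b 1 := h
    _ = d a 1 + d b 1 := by rw [h2]

end BiInvLemmas

theorem forward_dir (K : Type) [Group K] (hws : WeaklySofic K)
    (k n r : ℕ) (w : Fin r → FreeGroup (Fin k ⊕ Fin n))
    (hsolv : SolvableInAllFinite k n r w) (a : Fin k → K) :
    ∃ (L : Type) (_ : Group L) (ι : K →* L), Function.Injective ι ∧
      ∃ x : Fin n → L, ∀ j : Fin r,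
        FreeGroup.lift (Sum.elim (fun i => ι (a i)) x) (w j) = 1 := by
  classical
  let X := FreeGroup (K ⊕ Fin n)
  let Θ : FreeGroup (Fin k ⊕ Fin n) →* X :=
    FreeGroup.lift (Sum.elim (fun i => FreeGroup.of (Sum.inl (a i)))
      (fun i => FreeGroup.of (Sum.inr i)))
  let Rset : Set X :=
    {x | ∃ g h : K, x = FreeGroup.of (Sum.inl g) * FreeGroup.of (Sum.inl h) *
        (FreeGroup.of (Sum.inl (g * h)))⁻¹} ∪ Set.range fun j => Θ (w j)
  let N := Subgroup.normalClosure Rset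
  let L := X ⧸ N
  let π : X →* L := QuotientGroup.mk' N
  have hπ : ∀ y : X, π y = 1 ↔ y ∈ N := fun y => QuotientGroup.eq_one_iff y
  let ι : K →* L := MonoidHom.mk' (fun g => π (FreeGroup.of (Sum.inl g))) (by
    intro g h
    have hmem : ((FreeGroup.of (Sum.inl g) : X) * FreeGroup.of (Sum.inl h) *
        (FreeGroup.of (Sum.inl (g * h)))⁻¹) ∈ N :=
      Subgroup.subset_normalClosure (Or.inl ⟨g, h, rfl⟩)
    have h1 := (hπ _).2 hmem
    rw [map_mul, map_mul, map_inv, mul_inv_eq_one] at h1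
    show π (FreeGroup.of (Sum.inl (g * h))) = π (FreeGroup.of (Sum.inl g)) * π (FreeGroup.of (Sum.inl h))
    exact h1.symm)
  -- key estimate
  have key : ∀ G : X, G ∈ N → ∃ (SS : Finset K) (m : ℕ),
      ∀ (F : Type) [Group F], ∀ (d : F → F → ℝ) (φ : K → F) (x : Fin n → F) (ε : ℝ),
        IsBiInvariantMetric d → 0 ≤ ε →
        (∀ p ∈ SS, ∀ q ∈ SS, d (φ (p * q)) (φ p * φ q) ≤ ε) →
        (∀ j, FreeGroup.lift (Sum.elim (fun i => φ (a i)) x) (w j) = 1) →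
        d (FreeGroup.lift (Sum.elim φ x) G) 1 ≤ m * ε := by
    intro G hG
    refine Subgroup.closure_induction ?_ ?_ ?_ ?_ hG
    · -- conjugates of Rset
      intro t ht
      obtain ⟨s, hsR, hconj⟩ := Group.mem_conjugatesOfSet_iff.1 ht
      obtain ⟨c, hc⟩ := isConj_iff.1 hconj
      rcases hsR with ⟨g, h, rfl⟩ | ⟨j, rfl⟩
      · refine ⟨{g, h}, 1, ?_⟩
        intro F _ d φ x ε hd hε hmul hw
        rw [← hc]
        simp only [map_mul, map_inv, FreeGroup.lift_apply_of, Sum.elim_inl]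
        rw [biinv_conj_one hd]
        have h4 := biinv_right hd (φ g * φ h * (φ (g*h))⁻¹) 1 (φ (g*h))
        simp only [inv_mul_cancel_right, one_mul] at h4
        have h5 : d (φ g * φ h) (φ (g * h)) ≤ ε := by
          rw [hd.2.1]
          exact hmul g (by simp) h (by simp)
        push_cast
        rw [one_mul, ← h4]
        exact h5
      · refine ⟨∅, 0, ?_⟩
        intro F _ d φ x ε hd hε hmul hw
        rw [← hc]
        simp only [map_mul, map_inv]
        rw [biinv_conj_one hd]
        have comp : (FreeGroup.lift (Sum.elim φ x)).comp Θ =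
            FreeGroup.lift (Sum.elim (fun i => φ (a i)) x) := by
          apply FreeGroup.ext_hom
          rintro (i | i) <;> simp [Θ]
        have : (FreeGroup.lift (Sum.elim φ x)) (Θ (w j)) =
            FreeGroup.lift (Sum.elim (fun i => φ (a i)) x) (w j) := by
          rw [← comp]; rfl
        rw [this, hw j, biinv_self hd]
        push_cast
        norm_num
    · refine ⟨∅, 0, ?_⟩
      intro F _ d φ x ε hd hε hmul hw
      rw [map_one, biinv_self hd]
      norm_num
    · rintro x y hx hy ⟨S1, m1, h1⟩ ⟨S2, m2, h2⟩
      refine ⟨S1 ∪ S2, m1 + m2, ?_⟩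
      intro F _ d φ xx ε hd hε hmul hw
      rw [map_mul]
      calc d (FreeGroup.lift (Sum.elim φ xx) x * FreeGroup.lift (Sum.elim φ xx) y) 1
          ≤ d (FreeGroup.lift (Sum.elim φ xx) x) 1 + d (FreeGroup.lift (Sum.elim φ xx) y) 1 :=
            biinv_mul_one hd _ _
        _ ≤ m1 * ε + m2 * ε := by
            have e1 := h1 F d φ xx ε hd hε
              (fun p hp q hq => hmul p (Finset.mem_union_left _ hp) q (Finset.mem_union_left _ hq)) hw
            have e2 := h2 F d φ xx ε hd hε
              (fun p hp q hq => hmul p (Finset.mem_union_right _ hp) q (Finset.mem_union_right _ hq)) hw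
            linarith
        _ = ((m1 + m2 : ℕ) : ℝ) * ε := by push_cast; ring
    · rintro x hx ⟨S1, m1, h1⟩
      refine ⟨S1, m1, ?_⟩
      intro F _ d φ xx ε hd hε hmul hw
      rw [map_inv, biinv_inv_one hd]
      exact h1 F d φ xx ε hd hε hmul hw
  -- injectivity
  have hinj : Function.Injective ι := by
    rw [injective_iff_map_eq_one]
    intro g hg1
    by_contra hg
    have hmem : (FreeGroup.of (Sum.inl g : K ⊕ Fin n)) ∈ N := (hπ _).1 hg1
    obtain ⟨SS, m, hkey⟩ := key _ hmem
    have hε : (0:ℝ) < ((m:ℝ)+1)⁻¹ := by positivity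
    obtain ⟨F, iF, iG, d, φ, hd, hφ1, hmul, hsep⟩ := hws (insert g SS) _ hε
    obtain ⟨x, hx⟩ := hsolv F (fun i => φ (a i))
    have h1 : d (φ g) 1 ≤ m * ((m:ℝ)+1)⁻¹ := by
      have := hkey F d φ x _ hd (le_of_lt hε)
        (fun p hp q hq => hmul p (Finset.mem_insert_of_mem hp) q (Finset.mem_insert_of_mem hq)) hx
      simpa using this
    have h2 : (1:ℝ) ≤ d (φ g) 1 := hsep g (Finset.mem_insert_self _ _) hg
    have h3 : (m:ℝ) * ((m:ℝ)+1)⁻¹ < 1 := by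
      rw [← div_eq_mul_inv, div_lt_one (by positivity)]
      linarith
    linarith
  refine ⟨L, inferInstance, ι, hinj, fun i => π (FreeGroup.of (Sum.inr i)), fun j => ?_⟩
  have comp : FreeGroup.lift (Sum.elim (fun i => ι (a i))
        (fun i => π (FreeGroup.of (Sum.inr i)))) = π.comp Θ := by
    apply FreeGroup.ext_hom
    rintro (i | i) <;> simp [Θ, ι, π]
  rw [comp]
  exact (hπ _).2 (Subgroup.subset_normalClosure (Or.inr ⟨j, rfl⟩))

theorem backward_dir (K : Type) [Group K]
    (H : ∀ (k n r : ℕ) (w : Fin r → FreeGroup (Fin k ⊕ Fin n)),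
        SolvableInAllFinite k n r w →
        ∀ a : Fin k → K,
          ∃ (L : Type) (_ : Group L) (ι : K →* L), Function.Injective ι ∧
            ∃ x : Fin n → L, ∀ j : Fin r,
              FreeGroup.lift (Sum.elim (fun i => ι (a i)) x) (w j) = 1) :
    WeaklySofic K := by
  classical
  intro S ε hε
  -- index set of constants
  set T : Finset K := S ∪ Finset.image₂ (· * ·) S S with hTdef
  set k := T.card with hkdef
  let e : {x // x ∈ T} ≃ Fin k := (Fintype.equivFin _).trans (finCongr (Fintype.card_coe T))
  let b : Fin k → K := fun i => ((e.symm i : {x // x ∈ T}) : K)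
  let idx : (t : K) → t ∈ T → Fin k := fun t ht => e ⟨t, ht⟩
  have hb : ∀ (t : K) (ht : t ∈ T), b (idx t ht) = t := by
    intro t ht
    show ((e.symm (e ⟨t, ht⟩) : {x // x ∈ T}) : K) = t
    rw [Equiv.symm_apply_apply]
  -- relator words
  let RI := (Fin k × Fin k × Fin k) ⊕ Fin k
  let ρw : RI → FreeGroup (Fin k) := fun ρ =>
    match ρ with
    | Sum.inl (i, j, l) =>
        if b i * b j = b l then FreeGroup.of i * FreeGroup.of j * (FreeGroup.of l)⁻¹ else 1
    | Sum.inr i => if b i = 1 then FreeGroup.of i else 1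
  have hρtriv : ∀ (C : Type) (_ : Group C) (ι : K →* C) (ρ : RI),
      FreeGroup.lift (fun i => ι (b i)) (ρw ρ) = 1 := by
    intro C _ ι ρ
    have hcomp : ∀ z : FreeGroup (Fin k),
        FreeGroup.lift (fun i => ι (b i)) z = ι (FreeGroup.lift b z) := by
      intro z
      have : FreeGroup.lift (fun i => ι (b i)) = ι.comp (FreeGroup.lift b) := by
        apply FreeGroup.ext_hom; intro a; simp
      rw [this]; rfl
    have hbase : FreeGroup.lift b (ρw ρ) = 1 := by
      rcases ρ with ⟨i, j, l⟩ | i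
      · show FreeGroup.lift b (if b i * b j = b l then
            FreeGroup.of i * FreeGroup.of j * (FreeGroup.of l)⁻¹ else 1) = 1
        split
        · rename_i hcase
          simp [map_mul, map_inv, mul_inv_eq_one, hcase]
        · simp
      · show FreeGroup.lift b (if b i = 1 then FreeGroup.of i else 1) = 1
        split
        · rename_i hcase; simp [hcase]
        · simp
    rw [hcomp, hbase, map_one]
  let ρsgn : RI × Bool → FreeGroup (Fin k) := fun z => cond z.2 (ρw z.1) (ρw z.1)⁻¹
  have hρsgntriv : ∀ (C : Type) (_ : Group C) (ι : K →* C) (z : RI × Bool),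
      FreeGroup.lift (fun i => ι (b i)) (ρsgn z) = 1 := by
    intro C iC ι z
    rcases z with ⟨ρ, s⟩
    cases s
    · show FreeGroup.lift _ (ρw ρ)⁻¹ = 1
      rw [map_inv, hρtriv C iC ι ρ, inv_one]
    · exact hρtriv C iC ι ρ
  -- witnesses from the hypothesis H
  have hwit : ∀ (is : Fin k) (q : ℕ) (τ : Fin q → RI × Bool),
      ∃ (C : Type) (_ : Fintype C) (_ : Group C) (cc : Fin k → C),
        b is ≠ 1 → ∀ x : Fin q → C,
          FreeGroup.lift (Sum.elim cc x) (Wword k q is fun i => ρsgn (τ i)) ≠ 1 := by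
    intro is q τ
    by_cases hbs : b is = 1
    · exact ⟨PUnit, inferInstance, inferInstance, fun _ => 1, fun hcon => absurd hbs hcon⟩
    · by_contra hcon
      push_neg at hcon
      have hsolv : SolvableInAllFinite k q 1 (fun _ => Wword k q is fun i => ρsgn (τ i)) := by
        intro C i1 i2 cc
        obtain ⟨x, hx⟩ := (hcon C i1 i2 cc).2
        exact ⟨x, fun _ => hx⟩
      obtain ⟨L, iL, ι, hinj, x, hx⟩ := H k q 1 _ hsolv b
      have hx0 := hx 0
      have heval : FreeGroup.lift (Sum.elim (fun i => ι (b i)) x)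
          (Wword k q is fun i => ρsgn (τ i)) = (ι (b is))⁻¹ :=
        Wword_eval_triv _ _ _ _ _ _ (fun i => hρsgntriv L iL ι (τ i))
      rw [heval, inv_eq_one] at hx0
      exact hbs (hinj (by rw [hx0, map_one]))
  -- the bound m
  set m : ℕ := max 1 ⌈2 / ε⌉₊ with hmdef
  have hm1 : 1 ≤ m := le_max_left _ _
  have hm0 : (0 : ℝ) < (m : ℝ) := by exact_mod_cast Nat.lt_of_lt_of_le Nat.zero_lt_one hm1
  have hmε : 2 / (m : ℝ) ≤ ε := by
    rw [div_le_iff₀ hm0]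
    have h1 : 2 / ε ≤ (⌈2 / ε⌉₊ : ℝ) := Nat.le_ceil _
    have h2 : ((⌈2 / ε⌉₊ : ℕ) : ℝ) ≤ (m : ℝ) := by exact_mod_cast le_max_right 1 _
    have h3 := (div_le_iff₀ hε).1 (le_trans h1 h2)
    linarith
  -- choose the finite groups
  let Idx := Fin k × ((q : Fin (m + 1)) × (Fin (q : ℕ) → RI × Bool))
  choose C iF iG cc hC using fun p : Idx => hwit p.1 (p.2.1 : ℕ) p.2.2
  letI : ∀ p : Idx, Fintype (C p) := iF
  letI : ∀ p : Idx, Group (C p) := iG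
  let F := ∀ p : Idx, C p
  let cbar : Fin k → F := fun i p => cc p i
  let rv : RI → F := fun ρ => FreeGroup.lift cbar (ρw ρ)
  have hrv : ∀ (ρ : RI) (p : Idx), rv ρ p = FreeGroup.lift (cc p) (ρw ρ) := by
    intro ρ p
    have hcomp : (Pi.evalMonoidHom (fun p : Idx => C p) p).comp (FreeGroup.lift cbar) =
        FreeGroup.lift (cc p) := by
      apply FreeGroup.ext_hom; intro a; simp [Pi.evalMonoidHom]; rfl
    have h2 := DFunLike.congr_fun hcomp (ρw ρ)
    simpa using h2
  let P : Set F := {g | ∃ (ρ : RI) (u : F) (s : Bool), g = u * cond s (rv ρ) (rv ρ)⁻¹ * u⁻¹}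
  have hPinv : ∀ y ∈ P, y⁻¹ ∈ P := by
    rintro y ⟨ρ, u, s, rfl⟩
    refine ⟨ρ, u, !s, ?_⟩
    cases s <;> simp [mul_assoc, mul_inv_rev]
    exact (mul_inv_rev u _).trans ((congrArg (· * u⁻¹) ((mul_inv_rev _ _).trans
      (congrArg₂ (· * ·) (inv_inv u) (inv_inv _)))).trans (mul_assoc _ _ _))
    exact (mul_inv_rev u _).trans ((congrArg (· * u⁻¹) ((mul_inv_rev (rv ρ) u⁻¹).trans
      (congrArg (· * (rv ρ)⁻¹) (inv_inv u)))).trans (mul_assoc u (rv ρ)⁻¹ u⁻¹))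
  have hPconj : ∀ y ∈ P, ∀ u : F, u * y * u⁻¹ ∈ P := by
    rintro y ⟨ρ, v, s, rfl⟩ u
    refine ⟨ρ, u * v, s, ?_⟩
    simp [mul_assoc, mul_inv_rev]
    exact (mul_inv_rev u v).symm
  have hd := dP_biinv (P := P) hm1 hPinv hPconj
  have hmemP : ∀ (ρ : RI) (s : Bool), cond s (rv ρ) (rv ρ)⁻¹ ∈ P :=
    fun ρ s => ⟨ρ, 1, s, by simp⟩
  have hDP_P : ∀ g ∈ P, DP P m g ≤ 1 := by
    intro g hg
    exact DP_le_of_ok ⟨[g], rfl, by simpa using hg, by simp⟩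
  -- the map φ
  let φ : K → F := fun t => if h : t ∈ T ∧ t ≠ 1 then cbar (idx t h.1) else 1
  have hφ1 : φ 1 = 1 := by
    show (if h : (1 : K) ∈ T ∧ (1 : K) ≠ 1 then cbar (idx 1 h.1) else 1) = 1
    rw [dif_neg]; simp
  -- relator values
  have hrel3 : ∀ (i j l : Fin k), b i * b j = b l →
      rv (Sum.inl (i, j, l)) = cbar i * cbar j * (cbar l)⁻¹ := by
    intro i j l hcase
    show FreeGroup.lift cbar (ρw (Sum.inl (i, j, l))) = _
    have : ρw (Sum.inl (i, j, l)) = FreeGroup.of i * FreeGroup.of j * (FreeGroup.of l)⁻¹ := by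
      show (if b i * b j = b l then FreeGroup.of i * FreeGroup.of j * (FreeGroup.of l)⁻¹ else 1) = _
      rw [if_pos hcase]
    rw [this]
    simp
  have hrel1 : ∀ i : Fin k, b i = 1 → rv (Sum.inr i) = cbar i := by
    intro i hcase
    show FreeGroup.lift cbar (ρw (Sum.inr i)) = _
    have : ρw (Sum.inr i) = FreeGroup.of i := by
      show (if b i = 1 then FreeGroup.of i else 1) = _
      rw [if_pos hcase]
    rw [this]
    simp
  refine ⟨F, inferInstance, inferInstance, dP P m, φ, hd, hφ1, ?_, ?_⟩
  · -- almost multiplicativity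
    intro x hxS y hyS
    have hxT : x ∈ T := Finset.mem_union_left _ hxS
    have hyT : y ∈ T := Finset.mem_union_left _ hyS
    have hxyT : x * y ∈ T := Finset.mem_union_right _ (Finset.mem_image₂_of_mem hxS hyS)
    by_cases hx1 : x = 1
    · subst hx1
      rw [one_mul, hφ1, one_mul, biinv_self_aux hd]
      exact le_of_lt hε
    by_cases hy1 : y = 1
    · subst hy1
      rw [mul_one, hφ1, mul_one, biinv_self_aux hd]
      exact le_of_lt hε
    have hφx : φ x = cbar (idx x hxT) := by
      show (if h : x ∈ T ∧ x ≠ 1 then cbar (idx x h.1) else 1) = _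
      rw [dif_pos ⟨hxT, hx1⟩]
    have hφy : φ y = cbar (idx y hyT) := by
      show (if h : y ∈ T ∧ y ≠ 1 then cbar (idx y h.1) else 1) = _
      rw [dif_pos ⟨hyT, hy1⟩]
    by_cases hxy1 : x * y = 1
    · -- the case x*y = 1
      have hφxy : φ (x * y) = 1 := by rw [hxy1, hφ1]
      rw [hφxy, hφx, hφy, dP_def]
      have h1T : (1 : K) ∈ T := hxy1 ▸ hxyT
      set i := idx x hxT
      set j := idx y hyT
      set l := idx 1 h1T
      have hbl : b l = 1 := hb 1 h1T
      have hcase : b i * b j = b l := by rw [hb, hb, hbl, hxy1]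
      have hD : DP P m ((1 : F) * (cbar i * cbar j)⁻¹) ≤ 2 := by
        have heq : (1 : F) * (cbar i * cbar j)⁻¹ = (cbar i * cbar j)⁻¹ := one_mul _
        rw [heq, DP_inv hPinv]
        have hsplit : cbar i * cbar j = (cbar i * cbar j * (cbar l)⁻¹) * cbar l := (inv_mul_cancel_right _ _).symm
        rw [hsplit]
        calc DP P m ((cbar i * cbar j * (cbar l)⁻¹) * cbar l)
            ≤ DP P m (cbar i * cbar j * (cbar l)⁻¹) + DP P m (cbar l) := DP_mul _ _
          _ ≤ 1 + 1 := by
              refine add_le_add ?_ ?_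
              · refine hDP_P _ ?_
                rw [← hrel3 i j l hcase]
                simpa using hmemP (Sum.inl (i, j, l)) true
              · refine hDP_P _ ?_
                rw [← hrel1 l hbl]
                simpa using hmemP (Sum.inr l) true
          _ = 2 := by norm_num
      calc (DP P m ((1 : F) * (cbar i * cbar j)⁻¹) : ℝ) / m ≤ 2 / m := by
            gcongr
            exact_mod_cast hD
        _ ≤ ε := hmε
    · -- the case x*y ≠ 1
      have hφxy : φ (x * y) = cbar (idx (x * y) hxyT) := by
        show (if h : x * y ∈ T ∧ x * y ≠ 1 then cbar (idx (x * y) h.1) else 1) = _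
        rw [dif_pos ⟨hxyT, hxy1⟩]
      rw [hφxy, hφx, hφy, dP_def]
      set i := idx x hxT
      set j := idx y hyT
      set l := idx (x * y) hxyT
      have hcase : b i * b j = b l := by rw [hb, hb, hb]
      have hD : DP P m (cbar l * (cbar i * cbar j)⁻¹) ≤ 1 := by
        refine hDP_P _ ?_
        have heq : cbar l * (cbar i * cbar j)⁻¹ = (cbar i * cbar j * (cbar l)⁻¹)⁻¹ := by
          rw [mul_inv_rev (cbar i * cbar j) (cbar l)⁻¹, inv_inv]
        rw [heq, ← hrel3 i j l hcase]
        simpa using hmemP (Sum.inl (i, j, l)) false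
      calc (DP P m (cbar l * (cbar i * cbar j)⁻¹) : ℝ) / m ≤ 2 / m := by
            gcongr
            exact_mod_cast le_trans hD one_le_two
        _ ≤ ε := hmε
  · -- separation
    intro s hsS hs1
    have hsT : s ∈ T := Finset.mem_union_left _ hsS
    have hφs : φ s = cbar (idx s hsT) := by
      show (if h : s ∈ T ∧ s ≠ 1 then cbar (idx s h.1) else 1) = _
      rw [dif_pos ⟨hsT, hs1⟩]
    rw [hφs, dP_def, inv_one, mul_one]
    have hDm : DP P m (cbar (idx s hsT)) = m := by
      rcases DP_spec (P := P) (m := m) (cbar (idx s hsT)) with hok | heq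
      · exfalso
        obtain ⟨l, hlen, hmem, hprod⟩ := hok
        have hex : ∀ i : Fin l.length, ∃ (z : RI × Bool) (u : F),
            l.get i = u * cond z.2 (rv z.1) (rv z.1)⁻¹ * u⁻¹ := by
          intro i
          obtain ⟨ρ, u, sθ, hy⟩ := hmem (l.get i) (List.get_mem l i)
          exact ⟨(ρ, sθ), u, hy⟩
        choose τf uf hτ using hex
        have hlm : l.length < m + 1 := by
          have h5 := DP_le_m (P := P) (m := m) (cbar (idx s hsT))
          omega
        let p₀ : Idx := ⟨idx s hsT, ⟨⟨l.length, hlm⟩, τf⟩⟩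
        have hbis : b (idx s hsT) ≠ 1 := by rw [hb]; exact hs1
        apply hC p₀ hbis (fun i => uf i p₀)
        show FreeGroup.lift (Sum.elim (cc p₀) fun i => uf i p₀)
            (Wword k l.length (idx s hsT) fun i => ρsgn (τf i)) = 1
        rw [Wword_eval]
        have hstep : ∀ i : Fin l.length,
            uf i p₀ * FreeGroup.lift (cc p₀) (ρsgn (τf i)) * (uf i p₀)⁻¹ = l.get i p₀ := by
          intro i
          have h1 : FreeGroup.lift (cc p₀) (ρsgn (τf i)) =
              (cond (τf i).2 (rv (τf i).1) (rv (τf i).1)⁻¹) p₀ := by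
            have hdef : ρsgn (τf i) = cond (τf i).2 (ρw (τf i).1) (ρw (τf i).1)⁻¹ := rfl
            rw [hdef]
            cases hsb : (τf i).2
            · simp only [cond_false, map_inv]
              exact (congrArg (·⁻¹) (hrv (τf i).1 p₀)).symm
            · simp only [cond_true]
              exact (hrv (τf i).1 p₀).symm
          rw [h1, hτ i]
          rfl
        have hmid : ((List.finRange l.length).map fun i =>
            uf i p₀ * FreeGroup.lift (cc p₀) (ρsgn (τf i)) * (uf i p₀)⁻¹).prod
            = cbar (idx s hsT) p₀ := by
          have hmaps : ((List.finRange l.length).map fun i =>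
              uf i p₀ * FreeGroup.lift (cc p₀) (ρsgn (τf i)) * (uf i p₀)⁻¹)
              = l.map fun y => y p₀ := by
            conv_rhs => rw [← List.map_get_finRange l]
            rw [List.map_map]
            apply List.map_congr_left
            intro i _
            exact hstep i
          rw [hmaps, list_apply_prod, hprod]
        rw [hmid]
        exact inv_mul_cancel _
      · exact heq
    rw [hDm]
    exact le_of_eq (div_self (ne_of_gt hm0)).symm

/-- A group `K` is weakly sofic iff every finite system of group equations
solvable in all finite groups is solvable over `K`. -/
theorem weaklySofic_iff_solvable (K : Type) [Group K] :
    WeaklySofic K ↔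
      ∀ (k n r : ℕ) (w : Fin r → FreeGroup (Fin k ⊕ Fin n)),
        SolvableInAllFinite k n r w →
        ∀ a : Fin k → K,
          ∃ (L : Type) (_ : Group L) (ι : K →* L), Function.Injective ι ∧
            ∃ x : Fin n → L, ∀ j : Fin r,
              FreeGroup.lift (Sum.elim (fun i => ι (a i)) x) (w j) = 1 := by
  constructor
  · intro hws k n r w hsolv a
    exact forward_dir K hws k n r w hsolv a
  · intro H
    exact backward_dir K H
end

section
/- Let Γ be a countable group and (N_i) a sequence of finite-index normal subgroups such that the quotient maps separate points. Then there exists a chain 𝔒 of finite-index normal subgroups of Γ, together with a map N ↦ Φ_N from 𝔒 to subsets of Γ, such that: (1) 𝔒 is totally ordered by inclusion; (2) each Φ_N is a section of the quotient map Γ → Γ/N (the map is a bijection from Φ_N onto Γ/N); (3) Φ_N ⊆ Φ_M whenever M ⊆ N; (4) the union of all Φ_N equals Γ. -/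
/-- For a countable group `Γ` with a sequence of finite-index normal subgroups
whose quotient maps separate points, there is a chain `𝔒` of finite-index
normal subgroups together with sections `Φ_N` of the quotient maps, such that
the sections form an anti-chain map whose union is all of `Γ`. -/
theorem exists_chain_of_sections (Γ : Type) [Group Γ] [Countable Γ]
    (N : ℕ → Subgroup Γ) (hnor : ∀ i, (N i).Normal) (hfi : ∀ i, (N i).FiniteIndex)
    (hsep : ∀ g : Γ, g ≠ 1 → ∃ i, g ∉ N i) :
    ∃ (𝔒 : Set (Subgroup Γ)) (Φ : Subgroup Γ → Set Γ),
      (∀ M ∈ 𝔒, M.Normal ∧ M.FiniteIndex) ∧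
      (∀ M ∈ 𝔒, ∀ M' ∈ 𝔒, M ≤ M' ∨ M' ≤ M) ∧
      (∀ M ∈ 𝔒, Set.BijOn (fun g => (QuotientGroup.mk g : Γ ⧸ M)) (Φ M) Set.univ) ∧
      (∀ M ∈ 𝔒, ∀ M' ∈ 𝔒, M' ≤ M → Φ M ⊆ Φ M') ∧
      (⋃ M ∈ 𝔒, Φ M) = Set.univ := by
  obtain ⟨e, he⟩ := Countable.exists_injective_nat Γ
  -- the descending chain K n = N 0 ⊓ ... ⊓ N (n-1)
  let K : ℕ → Subgroup Γ := fun n => Nat.rec ⊤ (fun i Ki => Ki ⊓ N i) n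
  have hKs : ∀ n, K (n + 1) = K n ⊓ N n := fun n => rfl
  have hKnor : ∀ n, (K n).Normal := by
    intro n
    induction n with
    | zero => exact (inferInstance : (⊤ : Subgroup Γ).Normal)
    | succ n ih =>
      rw [hKs]
      exact ⟨fun x hx g => ⟨ih.conj_mem x hx.1 g, (hnor n).conj_mem x hx.2 g⟩⟩
  have hKfi : ∀ n, (K n).FiniteIndex := by
    intro n
    induction n with
    | zero => exact (inferInstance : (⊤ : Subgroup Γ).FiniteIndex)
    | succ n ih =>
      rw [hKs]
      exact ⟨Subgroup.index_inf_ne_zero ih.index_ne_zero (hfi n).index_ne_zero⟩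
  have hKanti : ∀ m n, m ≤ n → K n ≤ K m := by
    intro m n hmn
    induction n with
    | zero =>
      have : m = 0 := Nat.le_zero.mp hmn
      subst this; exact le_rfl
    | succ n ih =>
      rcases Nat.lt_or_ge m (n + 1) with h | h
      · exact le_trans (by rw [hKs]; exact inf_le_left) (ih (Nat.lt_succ_iff.mp h))
      · have : m = n + 1 := le_antisymm hmn h
        subst this; exact le_rfl
  have hKN : ∀ i n, i < n → K n ≤ N i := by
    intro i n h
    calc K n ≤ K (i + 1) := hKanti _ _ h
    _ ≤ N i := by rw [hKs]; exact inf_le_right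
  -- the sections: minimal elements of cosets
  refine ⟨Set.range K, fun M => {g | ∀ h : Γ,
      (QuotientGroup.mk h : Γ ⧸ M) = QuotientGroup.mk g → e g ≤ e h}, ?_, ?_, ?_, ?_, ?_⟩
  · rintro M ⟨n, rfl⟩
    exact ⟨hKnor n, hKfi n⟩
  · rintro M ⟨n, rfl⟩ M' ⟨m, rfl⟩
    rcases le_total n m with h | h
    · exact Or.inr (hKanti n m h)
    · exact Or.inl (hKanti m n h)
  · rintro M ⟨n, rfl⟩
    refine ⟨fun g _ => Set.mem_univ _, ?_, ?_⟩
    · intro g hg g' hg' hq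
      exact he (le_antisymm (hg g' hq.symm) (hg' g hq))
    · intro x _
      obtain ⟨a, rfl⟩ := QuotientGroup.mk_surjective x
      have hne : (e '' {h : Γ | (QuotientGroup.mk h : Γ ⧸ K n) = QuotientGroup.mk a}).Nonempty :=
        ⟨e a, a, rfl, rfl⟩
      obtain ⟨h₀, hh₀, hmin⟩ := Nat.sInf_mem hne
      refine ⟨h₀, ?_, hh₀⟩
      intro h hh
      rw [hmin]
      exact Nat.sInf_le ⟨h, hh.trans hh₀, rfl⟩
  · rintro M ⟨n, rfl⟩ M' ⟨m, rfl⟩ hle g hg h hh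
    refine hg h ?_
    rw [QuotientGroup.eq] at hh ⊢
    exact hle hh
  · rw [Set.eq_univ_iff_forall]
    intro g
    -- the set of elements smaller than g
    have hS : (e ⁻¹' Set.Iio (e g)).Finite :=
      Set.Finite.preimage he.injOn (Set.finite_Iio _)
    classical
    let f : Γ → ℕ := fun h => if hh : g⁻¹ * h ≠ 1 then Classical.choose (hsep _ hh) else 0
    have hf : ∀ h : Γ, g⁻¹ * h ≠ 1 → g⁻¹ * h ∉ N (f h) := by
      intro h hh
      simpa [f, hh] using Classical.choose_spec (hsep _ hh)
    set n : ℕ := hS.toFinset.sup f + 1 with hn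
    refine Set.mem_biUnion ⟨n, rfl⟩ ?_
    intro h hh
    by_contra hlt
    push_neg at hlt
    have hhS : h ∈ hS.toFinset := hS.mem_toFinset.mpr hlt
    have hne1 : g⁻¹ * h ≠ 1 := by
      intro hc
      have : g = h := inv_mul_eq_one.mp hc
      exact absurd (this ▸ hlt) (lt_irrefl _)
    have hfn : f h < n := Nat.lt_succ_of_le (Finset.le_sup hhS)
    have hmem : g⁻¹ * h ∈ K n := by
      rw [QuotientGroup.eq] at hh
      simpa using (K n).inv_mem hh
    exact hf h hne1 (hKN (f h) n hfn hmem)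
end
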